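/- arXiv:0801.4079 — 4 statements merged into one kernel-verified Lean document; each statement's English description precedes it below -/
import Mathlib

section
/- Let N be a uniform n-bit NLFSR with singular feedback functions f_i = x_{(i+1) mod n} ⊕ g_i and terminal bit τ, let a, b ∈ {0,…,n−1} with b < a, and let p_S be a monomial of the ANF of g_a with b ≥ a − min(S). If b < τ and, for every i ∈ {b, b+1, …, n−1}, every index in dep(g_i) is at most b, then the NLFSR N′ obtained from N by shifting p_S from g_a to g_b is equivalent to N. -/
/-- The state-update map of an NLFSR given by feedback functions `F`. -/
def nlfsrStep (n : ℕ) (F : Fin n → (Fin n → Bool) → Bool) (s : Fin n → Bool) : Fin n → Bool :=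
  fun i => F i s

/-- The state of the NLFSR at time `t`, starting from initial state `s0`. -/
def stateAt (n : ℕ) (F : Fin n → (Fin n → Bool) → Bool) (s0 : Fin n → Bool) (t : ℕ) :
    Fin n → Bool :=
  (nlfsrStep n F)^[t] s0

/-- The index `(i+1) mod n`. -/
def succIdx {n : ℕ} (i : Fin n) : Fin n :=
  ⟨((i : ℕ) + 1) % n, Nat.mod_lt _ i.pos⟩

/-- Two NLFSRs are equivalent if there are initial states (possibly different for each)
from which they generate the same output sequences (the output is bit 0). -/
def EquivalentN (n : ℕ) (F F' : Fin n → (Fin n → Bool) → Bool) : Prop :=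
  ∃ s0 s0' : Fin n → Bool, ∀ (t : ℕ) (z : Fin n), (z : ℕ) = 0 →
    stateAt n F s0 t z = stateAt n F' s0' t z

/-- The dependence set of a Boolean function of `n` variables. -/
def depF (n : ℕ) (f : (Fin n → Bool) → Bool) : Finset (Fin n) :=
  Finset.univ.filter
    (fun i => ∃ s : Fin n → Bool, f (Function.update s i false) ≠ f (Function.update s i true))

/-- The (unique) function `g_i` with `f_i = x_{i+1} ⊕ g_i`. -/
def gfun (n : ℕ) (F : Fin n → (Fin n → Bool) → Bool) (i : Fin n) : (Fin n → Bool) → Bool :=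
  fun s => xor (F i s) (s (succIdx i))

/-- All feedback functions are singular: `f_i = x_{(i+1) mod n} ⊕ g_i` with
`(i+1) mod n ∉ dep(g_i)`. -/
def SingularAll (n : ℕ) (F : Fin n → (Fin n → Bool) → Bool) : Prop :=
  ∀ i : Fin n, succIdx i ∉ depF n (gfun n F i)

/-- The terminal bit: the largest index `i ∈ {0,…,n−1}` such that `f_j = x_{j+1}`
for all `j < i`. -/
noncomputable def terminalBit (n : ℕ) (F : Fin n → (Fin n → Bool) → Bool) : ℕ :=
  sSup {i : ℕ | i < n ∧ ∀ j : Fin n, (j : ℕ) < i → ∀ s, F j s = s (succIdx j)}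

/-- A uniform NLFSR: all feedback functions are singular and, for every bit `i`
above the terminal bit `τ`, every index in `dep(g_i)` is at most `τ`. -/
def UniformN (n : ℕ) (F : Fin n → (Fin n → Bool) → Bool) : Prop :=
  SingularAll n F ∧
    ∀ i : Fin n, terminalBit n F < (i : ℕ) →
      ∀ k ∈ depF n (gfun n F i), (k : ℕ) ≤ terminalBit n F

/-- The monomial `p_S(x) = ∧_{i ∈ S} x_i`. -/
def monomial (n : ℕ) (S : Finset (Fin n)) : (Fin n → Bool) → Bool :=
  fun s => decide (∀ i ∈ S, s i = true)

/-- The ANF coefficient of `f` at the monomial with support `S`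
(Möbius inversion over `GF(2)`). -/
def anfCoeff (n : ℕ) (f : (Fin n → Bool) → Bool) (S : Finset (Fin n)) : Bool :=
  decide (Odd (S.powerset.filter (fun T => f (fun i => decide (i ∈ T)) = true)).card)

/-- `S − k = {(i − k) mod n : i ∈ S}`. -/
def shiftSet {n : ℕ} (S : Finset (Fin n)) (k : ℕ) : Finset (Fin n) :=
  S.image (fun i : Fin n => (⟨((i : ℕ) + (n - k % n)) % n, Nat.mod_lt _ i.pos⟩ : Fin n))

/-- The smallest index of a variable in `S`. -/
noncomputable def minIdx {n : ℕ} (S : Finset (Fin n)) : ℕ :=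
  sInf {m : ℕ | ∃ i ∈ S, (i : ℕ) = m}

/-- The largest index of a variable in `S`. -/
noncomputable def maxIdx {n : ℕ} (S : Finset (Fin n)) : ℕ :=
  sSup {m : ℕ | ∃ i ∈ S, (i : ℕ) = m}

/-- Shifting the monomial `p_S` from `g_a` to `g_b`: it replaces `g_a` by `g_a ⊕ p_S`
and `g_b` by `g_b ⊕ p_{S−(a−b)}`, leaving all other feedback functions unchanged. -/
def shiftNLFSR {n : ℕ} (F : Fin n → (Fin n → Bool) → Bool) (a b : Fin n)
    (S : Finset (Fin n)) : Fin n → (Fin n → Bool) → Bool :=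
  fun i s =>
    if i = a then xor (F i s) (monomial n S s)
    else if i = b then xor (F i s) (monomial n (shiftSet S ((a : ℕ) - (b : ℕ))) s)
    else F i s

/-- A Fibonacci NLFSR: `f_i = x_{i+1}` for `0 ≤ i < n−1`, and `f_{n−1} = x_0 ⊕ g_{n−1}`
is singular with `0 ∉ dep(g_{n−1})`. -/
def FibonacciP (n : ℕ) (F : Fin n → (Fin n → Bool) → Bool) : Prop :=
  (∀ i : Fin n, (i : ℕ) < n - 1 → ∀ s, F i s = s (succIdx i)) ∧
  (∀ i : Fin n, (i : ℕ) = n - 1 → succIdx i ∉ depF n (gfun n F i))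

/-- A finite directed graph: a finite vertex set together with a finite edge set. -/
structure DiGraph (V : Type) [DecidableEq V] where
  verts : Finset V
  edges : Finset (V × V)

/-- One substitution step `sub(v_i, v_j)`: if `v_i` has exactly one incoming edge,
coming from `v_j ≠ v_i`, remove `v_i` and, for each outgoing edge `(v_i, v_k)`,
add the edge `(v_j, v_k)`. -/
def SubStep {V : Type} [DecidableEq V] (G G' : DiGraph V) : Prop :=
  ∃ i j : V, i ∈ G.verts ∧ j ∈ G.verts ∧ i ≠ j ∧
    G.edges.filter (fun e => e.2 = i) = {(j, i)} ∧
    G' = ⟨G.verts.erase i,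
      (G.edges.filter (fun e => e.1 ≠ i ∧ e.2 ≠ i)) ∪
        ((G.edges.filter (fun e => e.1 = i)).image (fun e => (j, e.2)))⟩

/-- A graph is reducible to the single vertex `v` if some finite sequence of
substitutions transforms it into a one-vertex graph on `v`. -/
def ReducibleTo {V : Type} [DecidableEq V] (G : DiGraph V) (v : V) : Prop :=
  ∃ G' : DiGraph V, Relation.ReflTransGen SubStep G G' ∧ G'.verts = {v}

/-- The feedback graph of an NLFSR: there is an edge from `v_i` to `v_j`
iff `i ∈ dep(f_j)`. -/
def feedbackGraph (n : ℕ) (F : Fin n → (Fin n → Bool) → Bool) : DiGraph (Fin n) :=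
  ⟨Finset.univ, Finset.univ.filter (fun e : Fin n × Fin n => e.1 ∈ depF n (F e.2))⟩

/-- XOR of the Booleans `f x` over `x ∈ A`. -/
def xorSum {α : Type*} (A : Finset α) (f : α → Bool) : Bool :=
  decide (Odd (A.filter (fun x => f x = true)).card)

/-- The feedback functions `g̃_i` of the fully shifted Galois NLFSR obtained from a
Fibonacci NLFSR whose feedback monomial supports are `P`, with terminal bit `τ`. -/
noncomputable def galoisG (n : ℕ) (P : Finset (Finset (Fin n))) (τ : ℕ) :
    Fin n → (Fin n → Bool) → Bool :=
  fun i s =>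
    xor
      (xorSum (P.filter (fun S => minIdx S ≤ n - 1 - τ ∧ n - 1 - minIdx S = (i : ℕ)))
        (fun S => monomial n (shiftSet S (minIdx S)) s))
      (if (i : ℕ) = τ then
        xorSum (P.filter (fun S => n - 1 - τ < minIdx S))
          (fun S => monomial n (shiftSet S (n - 1 - τ)) s)
      else false)

/-!
Bits `0, …, b` of `N` are plain shift stages and `S ⊆ {a − b, …, b}`, so the value `p_S(x(t))`
that `N` injects at bit `a` equals `p_{S−(a−b)}(x(t + a − b))`, which `N′` injects at bit `b`
exactly when that value, travelling down the register, arrives there. Hence, XORing bit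
`i ∈ (b, a]` of a trajectory `y` of `N` with `p_{S−(a−b)}(y(t + i − b − 1))` gives a trajectory of
`N′`: no `g_i` ever reads the corrected bits (those with `i < b` vanish, those with `i ≥ b` read
only bits `≤ b`), and bits `0, …, b`, in particular the output bit, are unchanged.
-/

section BooleanFunctions

variable {n : ℕ} {f : (Fin n → Bool) → Bool}

lemma apply_update_of_notMem_depF {i : Fin n} (hi : i ∉ depF n f) (s : Fin n → Bool) (c : Bool) :
    f (Function.update s i c) = f s := by
  simp only [depF, Finset.mem_filter, Finset.mem_univ, true_and, not_exists, not_not] at hi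
  have h := hi s
  conv_rhs => rw [← Function.update_eq_self i s]
  cases c <;> cases s i <;> simp_all

lemma apply_eq_of_eqOn_depF {s s' : Fin n → Bool} (h : ∀ i ∈ depF n f, s i = s' i) :
    f s = f s' := by
  classical
  suffices ∀ D : Finset (Fin n), ∀ s, (∀ i ∉ D, s i = s' i) → (∀ i ∈ depF n f, s i = s' i) →
      f s = f s' from this Finset.univ s (by simp) h
  intro D
  induction D using Finset.induction_on with
  | empty => exact fun s hs _ => congrArg f (funext fun i => hs i (Finset.notMem_empty i))
  | @insert i D hiD ih =>
    intro s hs hdep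
    have hupd : f (Function.update s i (s' i)) = f s' := by
      refine ih _ (fun j hj => ?_) (fun j hj => ?_)
      · by_cases hji : j = i
        · subst hji; simp
        · rw [Function.update_of_ne hji]; exact hs j (by simp [hji, hj])
      · by_cases hji : j = i
        · subst hji; simp
        · rw [Function.update_of_ne hji]; exact hdep j hj
    rw [← hupd]
    by_cases hi : i ∈ depF n f
    · rw [← hdep i hi, Function.update_eq_self]
    · exact (apply_update_of_notMem_depF hi s _).symm

lemma mem_depF_of_anfCoeff_eq_true {S : Finset (Fin n)} (hS : anfCoeff n f S = true)
    {i : Fin n} (hi : i ∈ S) : i ∈ depF n f := by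
  classical
  by_contra hdep
  have hinsert : ∀ T : Finset (Fin n),
      f (fun j => decide (j ∈ insert i T)) = f (fun j => decide (j ∈ T)) := by
    intro T
    have hχ : (fun j => decide (j ∈ insert i T)) =
        Function.update (fun j => decide (j ∈ T)) i true := by
      funext j; by_cases hji : j = i <;> simp [hji]
    rw [hχ, apply_update_of_notMem_depF hdep]
  -- subsets of `S` containing `i` pair off with those avoiding it
  have heven : Even (S.powerset.filter (fun T => f (fun j => decide (j ∈ T)) = true)).card := by
    rw [← Finset.insert_erase hi, Finset.card_filter,
      Finset.sum_powerset_insert (Finset.notMem_erase i S)]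
    simp only [hinsert]
    exact ⟨_, rfl⟩
  exact Nat.not_odd_iff_even.mpr heven (of_decide_eq_true hS)

end BooleanFunctions

section Monomials

variable {n : ℕ} {S : Finset (Fin n)}

lemma monomial_congr {s s' : Fin n → Bool} (h : ∀ i ∈ S, s i = s' i) :
    monomial n S s = monomial n S s' :=
  decide_eq_decide.mpr (forall₂_congr fun i hi => by rw [h i hi])

lemma add_sub_mod_mod_add_eq_self {k j : ℕ} (hkj : k ≤ j) (hjn : j < n) :
    (j + (n - k % n)) % n + k = j := by
  rw [Nat.mod_eq_of_lt (a := k) (by omega), show j + (n - k) = j - k + n by omega,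
    Nat.add_mod_right, Nat.mod_eq_of_lt (by omega)]
  omega

lemma val_add_of_mem_shiftSet {k : ℕ} (hk : ∀ j ∈ S, k ≤ (j : ℕ)) {i : Fin n}
    (hi : i ∈ shiftSet S k) : ∃ j ∈ S, (i : ℕ) + k = j := by
  obtain ⟨j, hj, rfl⟩ := Finset.mem_image.1 hi
  exact ⟨j, hj, add_sub_mod_mod_add_eq_self (hk j hj) j.isLt⟩

lemma monomial_shiftSet {k : ℕ} (hk : ∀ j ∈ S, k ≤ (j : ℕ)) {s s' : Fin n → Bool}
    (h : ∀ j ∈ S, ∀ i : Fin n, (i : ℕ) + k = j → s i = s' j) :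
    monomial n (shiftSet S k) s = monomial n S s' := by
  simp only [monomial, shiftSet, Finset.forall_mem_image]
  exact decide_eq_decide.mpr (forall₂_congr fun j hj => by
    rw [h j hj _ (add_sub_mod_mod_add_eq_self (hk j hj) j.isLt)])

end Monomials

section Registers

variable {n : ℕ} {F : Fin n → (Fin n → Bool) → Bool}

def IsTrajectory (n : ℕ) (F : Fin n → (Fin n → Bool) → Bool) (x : ℕ → Fin n → Bool) : Prop :=
  ∀ t, x (t + 1) = nlfsrStep n F (x t)

lemma isTrajectory_stateAt (s0 : Fin n → Bool) : IsTrajectory n F (stateAt n F s0) :=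
  fun t => Function.iterate_succ_apply' _ t s0

lemma IsTrajectory.stateAt_eq {x : ℕ → Fin n → Bool} (hx : IsTrajectory n F x) (t : ℕ) :
    stateAt n F (x 0) t = x t := by
  induction t with
  | zero => rfl
  | succ t ih => rw [isTrajectory_stateAt _ t, ih, hx t]

lemma equivalentN_of_isTrajectory {F' : Fin n → (Fin n → Bool) → Bool} {x y : ℕ → Fin n → Bool}
    (hx : IsTrajectory n F x) (hy : IsTrajectory n F' y)
    (hxy : ∀ (t : ℕ) (z : Fin n), (z : ℕ) = 0 → x t z = y t z) : EquivalentN n F F' :=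
  ⟨x 0, y 0, fun t z hz => by rw [hx.stateAt_eq, hy.stateAt_eq]; exact hxy t z hz⟩

lemma val_succIdx_of_lt {i : Fin n} (h : (i : ℕ) + 1 < n) : (succIdx i : ℕ) = i + 1 :=
  Nat.mod_eq_of_lt h

lemma val_succIdx_eq_zero_or (i : Fin n) : (succIdx i : ℕ) = 0 ∨ (succIdx i : ℕ) = i + 1 := by
  rcases Nat.lt_or_ge ((i : ℕ) + 1) n with h | h
  · exact .inr (val_succIdx_of_lt h)
  · left
    show ((i : ℕ) + 1) % n = 0
    rw [show (i : ℕ) + 1 = n by omega, Nat.mod_self]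

lemma apply_eq_xor_gfun (i : Fin n) (s : Fin n → Bool) :
    F i s = xor (gfun n F i s) (s (succIdx i)) := by
  simp [gfun]

lemma apply_eq_succIdx_of_lt_terminalBit {j : Fin n} (hj : (j : ℕ) < terminalBit n F)
    (s : Fin n → Bool) : F j s = s (succIdx j) :=
  (Nat.sSup_mem (s := {i | i < n ∧ ∀ j : Fin n, (j : ℕ) < i → ∀ s, F j s = s (succIdx j)})
    ⟨0, j.pos, by simp⟩ ⟨n, fun _ h => h.1.le⟩).2 j hj s

lemma IsTrajectory.apply_add_of_shift {x : ℕ → Fin n → Bool} (hx : IsTrajectory n F x)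
    {k : Fin n} (hshift : ∀ i : Fin n, (i : ℕ) < k → ∀ s, F i s = s (succIdx i)) (t c : ℕ)
    (j : Fin n) (hjk : (j : ℕ) + c = k) : x (t + c) j = x t k := by
  induction c generalizing j with
  | zero => rw [show j = k from Fin.ext (by simpa using hjk)]; rfl
  | succ c ih =>
    have hsucc : (succIdx j : ℕ) = j + 1 := val_succIdx_of_lt (by omega)
    rw [← Nat.add_assoc, hx, nlfsrStep, hshift j (by omega), ih _ (by omega)]

lemma IsTrajectory.monomial_shiftSet_add {x : ℕ → Fin n → Bool} (hx : IsTrajectory n F x)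
    {m : ℕ} (hshift : ∀ i : Fin n, (i : ℕ) < m → ∀ s, F i s = s (succIdx i))
    {S : Finset (Fin n)} {k : ℕ} (hSk : ∀ j ∈ S, k ≤ (j : ℕ)) (hSm : ∀ j ∈ S, (j : ℕ) ≤ m)
    (t : ℕ) : monomial n (shiftSet S k) (x (t + k)) = monomial n S (x t) :=
  monomial_shiftSet hSk fun j hj i hij =>
    hx.apply_add_of_shift (fun i' hi' => hshift i' (by have := hSm j hj; omega)) t k i hij

end Registers

section Compensation

variable {n : ℕ} {F : Fin n → (Fin n → Bool) → Bool} {a b : Fin n} {S : Finset (Fin n)}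
  {y : ℕ → Fin n → Bool}

def compensatedState (a b : Fin n) (S : Finset (Fin n)) (y : ℕ → Fin n → Bool) (t : ℕ) :
    Fin n → Bool :=
  fun i => if b < i ∧ i ≤ a then
      xor (y t i) (monomial n (shiftSet S ((a : ℕ) - b)) (y (t + ((i : ℕ) - b - 1))))
    else y t i

lemma compensatedState_of_le (t : ℕ) {i : Fin n} (hi : i ≤ b) :
    compensatedState a b S y t i = y t i :=
  if_neg fun h => absurd h.1 (not_lt.2 hi)

lemma compensatedState_of_lt_of_le (t : ℕ) {i : Fin n} (hb : b < i) (ha : i ≤ a) :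
    compensatedState a b S y t i =
      xor (y t i) (monomial n (shiftSet S ((a : ℕ) - b)) (y (t + ((i : ℕ) - b - 1)))) :=
  if_pos ⟨hb, ha⟩

lemma compensatedState_of_gt (t : ℕ) {i : Fin n} (hi : a < i) :
    compensatedState a b S y t i = y t i :=
  if_neg fun h => absurd h.2 (not_le.2 hi)

lemma compensatedState_succIdx_of_le (t : ℕ) {i : Fin n} (hi : a ≤ i) :
    compensatedState a b S y t (succIdx i) = y t (succIdx i) := by
  refine if_neg fun h => ?_
  rcases val_succIdx_eq_zero_or i with h | h <;> omega

lemma compensatedState_succIdx_of_lt (t : ℕ) {i : Fin n} (hb : b ≤ i) (hi : i < a) :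
    compensatedState a b S y t (succIdx i) =
      xor (y t (succIdx i)) (monomial n (shiftSet S ((a : ℕ) - b)) (y (t + ((i : ℕ) - b)))) := by
  have hsucc : (succIdx i : ℕ) = i + 1 := val_succIdx_of_lt (by omega)
  have hmem : b < succIdx i ∧ succIdx i ≤ a := by omega
  rw [compensatedState, if_pos hmem, hsucc, show (i : ℕ) + 1 - b - 1 = i - b by omega]

lemma gfun_compensatedState {i : Fin n} (hdep : ∀ k ∈ depF n (gfun n F i), (k : ℕ) ≤ b)
    (t : ℕ) : gfun n F i (compensatedState a b S y t) = gfun n F i (y t) :=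
  apply_eq_of_eqOn_depF fun k hk => compensatedState_of_le t (hdep k hk)

lemma monomial_compensatedState {T : Finset (Fin n)} (hT : ∀ j ∈ T, (j : ℕ) ≤ b) (t : ℕ) :
    monomial n T (compensatedState a b S y t) = monomial n T (y t) :=
  monomial_congr fun j hj => compensatedState_of_le t (hT j hj)

lemma shiftNLFSR_compensatedState_of_le (hy : IsTrajectory n F y) (hba : b < a)
    (hshift : ∀ i : Fin n, (i : ℕ) ≤ b → ∀ s, F i s = s (succIdx i))
    (hSb : ∀ j ∈ S, (j : ℕ) ≤ b) (hSd : ∀ j ∈ S, (a : ℕ) - b ≤ j) (t : ℕ) {i : Fin n}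
    (hi : i ≤ b) :
    shiftNLFSR F a b S i (compensatedState a b S y t) = compensatedState a b S y (t + 1) i := by
  rw [compensatedState_of_le (t + 1) hi, hy t, nlfsrStep, hshift i hi]
  have hia : i ≠ a := by omega
  rcases hi.lt_or_eq with hib | rfl
  · have hsucc : (succIdx i : ℕ) = i + 1 := val_succIdx_of_lt (by omega)
    simp only [shiftNLFSR, if_neg hia, if_neg hib.ne, hshift i hi]
    exact compensatedState_of_le t (by omega)
  · have hshiftSet : ∀ j ∈ shiftSet S ((a : ℕ) - i), (j : ℕ) ≤ i := fun j hj => by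
      obtain ⟨j', hj', hjj'⟩ := val_add_of_mem_shiftSet hSd hj
      have := hSb j' hj'
      omega
    simp only [shiftNLFSR, if_neg hia, if_true, hshift i le_rfl,
      compensatedState_succIdx_of_lt t le_rfl hba, Nat.sub_self, Nat.add_zero,
      monomial_compensatedState hshiftSet, Bool.xor_assoc, Bool.xor_self, Bool.xor_false]

lemma shiftNLFSR_compensatedState_of_gt (hy : IsTrajectory n F y) (hba : b < a)
    (hshift : ∀ i : Fin n, (i : ℕ) ≤ b → ∀ s, F i s = s (succIdx i))
    (hdep : ∀ i : Fin n, (b : ℕ) ≤ (i : ℕ) → ∀ k ∈ depF n (gfun n F i), (k : ℕ) ≤ (b : ℕ))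
    (hSb : ∀ j ∈ S, (j : ℕ) ≤ b) (hSd : ∀ j ∈ S, (a : ℕ) - b ≤ j) (t : ℕ) {i : Fin n}
    (hi : b < i) :
    shiftNLFSR F a b S i (compensatedState a b S y t) = compensatedState a b S y (t + 1) i := by
  have hF : F i (compensatedState a b S y t) =
      xor (gfun n F i (y t)) (compensatedState a b S y t (succIdx i)) := by
    rw [apply_eq_xor_gfun (F := F), gfun_compensatedState (hdep i hi.le)]
  have hy1 : y (t + 1) i = xor (gfun n F i (y t)) (y t (succIdx i)) := by
    rw [hy t, nlfsrStep, apply_eq_xor_gfun (F := F)]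
  rcases lt_trichotomy i a with hia | rfl | hai
  · simp only [shiftNLFSR, if_neg hia.ne, if_neg hi.ne', hF,
      compensatedState_succIdx_of_lt t hi.le hia, compensatedState_of_lt_of_le (t + 1) hi hia.le,
      hy1, Bool.xor_assoc, show t + 1 + ((i : ℕ) - b - 1) = t + (i - b) by omega]
  · have hdelay := hy.monomial_shiftSet_add (fun j hj => hshift j hj.le) hSd hSb t
    simp only [shiftNLFSR, if_true, hF, compensatedState_succIdx_of_le t le_rfl,
      compensatedState_of_lt_of_le (t + 1) hi le_rfl, hy1, monomial_compensatedState hSb,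
      ← hdelay, show t + 1 + ((i : ℕ) - b - 1) = t + (i - b) by omega]
  · simp only [shiftNLFSR, if_neg hai.ne', if_neg (hba.trans hai).ne', hF,
      compensatedState_succIdx_of_le t hai.le, compensatedState_of_gt (t + 1) hai, hy1]

lemma isTrajectory_compensatedState (hy : IsTrajectory n F y) (hba : b < a)
    (hshift : ∀ i : Fin n, (i : ℕ) ≤ b → ∀ s, F i s = s (succIdx i))
    (hdep : ∀ i : Fin n, (b : ℕ) ≤ (i : ℕ) → ∀ k ∈ depF n (gfun n F i), (k : ℕ) ≤ (b : ℕ))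
    (hSb : ∀ j ∈ S, (j : ℕ) ≤ b) (hSd : ∀ j ∈ S, (a : ℕ) - b ≤ j) :
    IsTrajectory n (shiftNLFSR F a b S) (compensatedState a b S y) := fun t => funext fun i => by
  rcases le_or_gt i b with hi | hi
  · exact (shiftNLFSR_compensatedState_of_le hy hba hshift hSb hSd t hi).symm
  · exact (shiftNLFSR_compensatedState_of_gt hy hba hshift hdep hSb hSd t hi).symm

end Compensation

lemma shiftNLFSR_equivalentN {n : ℕ} {F : Fin n → (Fin n → Bool) → Bool} {a b : Fin n}
    {S : Finset (Fin n)} (hba : b < a)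
    (hshift : ∀ i : Fin n, (i : ℕ) ≤ b → ∀ s, F i s = s (succIdx i))
    (hdep : ∀ i : Fin n, (b : ℕ) ≤ (i : ℕ) → ∀ k ∈ depF n (gfun n F i), (k : ℕ) ≤ (b : ℕ))
    (hSb : ∀ j ∈ S, (j : ℕ) ≤ b) (hSd : ∀ j ∈ S, (a : ℕ) - b ≤ j) :
    EquivalentN n (shiftNLFSR F a b S) F :=
  have hy := isTrajectory_stateAt (F := F) fun _ => false
  equivalentN_of_isTrajectory (isTrajectory_compensatedState hy hba hshift hdep hSb hSd) hy
    fun t _ hz => compensatedState_of_le t (by omega)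

theorem shifting_below_terminal_equivalent_general (n : ℕ) (F : Fin n → (Fin n → Bool) → Bool)
    (a b : Fin n) (hba : b < a)
    (S : Finset (Fin n))
    (hmem : anfCoeff n (gfun n F a) S = true)
    (hmin : (a : ℕ) - minIdx S ≤ (b : ℕ))
    (hterm : (b : ℕ) < terminalBit n F)
    (hdep : ∀ i : Fin n, (b : ℕ) ≤ (i : ℕ) →
      ∀ k ∈ depF n (gfun n F i), (k : ℕ) ≤ (b : ℕ)) :
    EquivalentN n (shiftNLFSR F a b S) F := by
  refine shiftNLFSR_equivalentN hba (fun i hi => apply_eq_succIdx_of_lt_terminalBit (by omega))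
    hdep (fun j hj => hdep a hba.le j (mem_depF_of_anfCoeff_eq_true hmem hj)) fun j hj => ?_
  have : minIdx S ≤ j := Nat.sInf_le ⟨j, hj, rfl⟩
  omega

/-- Lemma 3(b): if `b ≥ a − min(S)`, `b < τ` and `dep(g_i) ⊆ {0,…,b}`
for every `i ∈ {b,…,n−1}`, then shifting the monomial `p_S` from `g_a` to `g_b`
preserves equivalence. -/
theorem shifting_below_terminal_equivalent (n : ℕ) (F : Fin n → (Fin n → Bool) → Bool)
    (hU : UniformN n F)
    (a b : Fin n) (hba : b < a)
    (S : Finset (Fin n)) (hS : S.Nonempty)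
    (hmem : anfCoeff n (gfun n F a) S = true)
    (hmin : (a : ℕ) - minIdx S ≤ (b : ℕ))
    (hterm : (b : ℕ) < terminalBit n F)
    (hdep : ∀ i : Fin n, (b : ℕ) ≤ (i : ℕ) →
      ∀ k ∈ depF n (gfun n F i), (k : ℕ) ≤ (b : ℕ)) :
    EquivalentN n (shiftNLFSR F a b S) F :=
  shifting_below_terminal_equivalent_general n F a b hba S hmem hmin hterm hdep
end

section
/- Let N be an n-bit NLFSR all of whose feedback functions are singular, and suppose the feedback graph of N is reducible to the single vertex v_i for some i ∈ {0,…,n−1}. Then there exists a Boolean function h of n variables such that, for every initial state of N and every time t ≥ n, the value of bit i at time t equals h(s_i(t−n), s_i(t−n+1), …, s_i(t−1)), where s_i(u) denotes the value of bit i at time u. -/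
/-! A substitution `sub(v_k, v_j)` is possible only when every input of `f_k` is bit `j` or a
bit already eliminated in favour of `j`; so bit `k` at time `t` is a function of bit `j` at the
times `t - D, …, t - 1` for some window length `D`. Composing these windows along the
substitutions, every eliminated bit is a function of a window of its surviving representative
whose length is at most the number of bits merged into that representative. Once only `v_i`
survives, every bit other than `i` is a function of at most `n - 1` preceding values of bit `i`,
and `f_i` turns this into a recurrence of order `n` for bit `i`. -/

open Finset Function

variable {n : ℕ}

lemma apply_update_eq_of_notMem_depF {f : (Fin n → Bool) → Bool} {a : Fin n}
    (ha : a ∉ depF n f) (x : Fin n → Bool) (b : Bool) : f (update x a b) = f x := by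
  simp only [depF, mem_filter, mem_univ, true_and, not_exists, not_not] at ha
  have key : ∀ b b', f (update x a b) = f (update x a b') := by
    intro b b'
    cases b <;> cases b' <;> simp [ha x]
  rw [key b (x a), update_eq_self]

lemma eq_of_forall_mem_depF {f : (Fin n → Bool) → Bool} {s s' : Fin n → Bool}
    (h : ∀ l ∈ depF n f, s l = s' l) : f s = f s' := by
  suffices ∀ A : Finset (Fin n), f s = f (A.piecewise s' s) by simpa using this univ
  intro A
  induction A using Finset.induction_on with
  | empty => simp
  | insert a A ha ih =>
    rw [piecewise_insert, ih]
    by_cases hd : a ∈ depF n f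
    · rw [← h a hd, ← piecewise_eq_of_notMem A s' s ha, update_eq_self]
    · exact (apply_update_eq_of_notMem_depF hd _ _).symm

section Windows

variable (F : Fin n → (Fin n → Bool) → Bool)

lemma stateAt_succ (s : Fin n → Bool) (t : ℕ) (k : Fin n) :
    stateAt n F s (t + 1) k = F k (stateAt n F s t) := by
  rw [stateAt, iterate_succ_apply']
  rfl

lemma stateAt_stateAt (s : Fin n → Bool) (a b : ℕ) :
    stateAt n F (stateAt n F s a) b = stateAt n F s (a + b) := by
  rw [stateAt, stateAt, stateAt, ← iterate_add_apply, add_comm]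

/-- Bit `k` at time `D` is a function of bit `r` at times `0, …, D - 1`. By `stateAt_stateAt`
the same then holds for the windows starting at any time. -/
def DeterminedBy (k r : Fin n) (D : ℕ) : Prop :=
  ∀ s s' : Fin n → Bool, (∀ m < D, stateAt n F s m r = stateAt n F s' m r) →
    stateAt n F s D k = stateAt n F s' D k

variable {F}

lemma DeterminedBy.mono {k r : Fin n} {D D' : ℕ} (h : DeterminedBy F k r D) (hD : D ≤ D') :
    DeterminedBy F k r D' := by
  intro s s' hw
  obtain ⟨e, rfl⟩ := Nat.exists_eq_add_of_le' hD
  simp only [← stateAt_stateAt F _ e D]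
  exact h _ _ fun m hm => by simpa only [stateAt_stateAt] using hw (e + m) (by omega)

lemma DeterminedBy.trans {l k j : Fin n} {D₁ D₂ : ℕ} (hl : DeterminedBy F l k D₁)
    (hk : DeterminedBy F k j D₂) : DeterminedBy F l j (D₁ + D₂) := by
  intro s s' hw
  rw [add_comm, ← stateAt_stateAt, ← stateAt_stateAt]
  refine hl _ _ fun m hm => ?_
  rw [stateAt_stateAt, stateAt_stateAt, add_comm, ← stateAt_stateAt, ← stateAt_stateAt]
  exact hk _ _ fun m' hm' => by simpa only [stateAt_stateAt] using hw (m + m') (by omega)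

lemma determinedBy_succ_of_forall_mem_depF {k j : Fin n} {D : ℕ}
    (h : ∀ l ∈ depF n (F k), l = j ∨ DeterminedBy F l j D) : DeterminedBy F k j (D + 1) := by
  intro s s' hw
  rw [stateAt_succ, stateAt_succ]
  refine eq_of_forall_mem_depF fun l hl => ?_
  rcases h l hl with rfl | hdet
  · exact hw D (by omega)
  · exact hdet s s' fun m hm => hw m (by omega)

lemma DeterminedBy.exists_eq_apply {k r : Fin n} {D : ℕ} (h : DeterminedBy F k r D) :
    ∃ g : (Fin D → Bool) → Bool, ∀ s : Fin n → Bool,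
      stateAt n F s D k = g fun m => stateAt n F s m r := by
  have hfac : FactorsThrough (fun s => stateAt n F s D k)
      (fun s (m : Fin D) => stateAt n F s m r) :=
    fun s s' hw => h s s' fun m hm => congrFun hw ⟨m, hm⟩
  exact ⟨extend _ _ fun _ => false, fun s => (hfac.extend_apply _ s).symm⟩

end Windows

section Reduction

def absorbed (V : Finset (Fin n)) (rep : Fin n → Fin n) (v : Fin n) : Finset (Fin n) :=
  univ.filter fun l => l ∉ V ∧ rep l = v

lemma card_absorbed_add_card_le (V : Finset (Fin n)) (rep : Fin n → Fin n) (v : Fin n) :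
    (absorbed V rep v).card + V.card ≤ n := by
  have hsub : absorbed V rep v ⊆ Vᶜ := fun l hl => by simp_all [absorbed]
  calc (absorbed V rep v).card + V.card ≤ Vᶜ.card + V.card := by gcongr
    _ = n := by rw [card_compl_add_card, Fintype.card_fin]

lemma absorbed_subset_absorbed_erase {V : Finset (Fin n)} {rep : Fin n → Fin n} {k j v : Fin n}
    (hvk : v ≠ k) :
    absorbed V rep v ⊆ absorbed (V.erase k) (fun l => if rep l = k then j else rep l) v := by
  intro l hl
  simp only [absorbed, mem_filter, mem_univ, true_and, mem_erase] at hl ⊢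
  obtain ⟨hlV, rfl⟩ := hl
  simp [hlV, hvk]

lemma card_absorbed_add_le_absorbed_erase {V : Finset (Fin n)} {rep : Fin n → Fin n}
    {k j : Fin n} (hk : k ∈ V) (hrep : rep k = k) (hkj : k ≠ j) :
    (absorbed V rep k).card + ((absorbed V rep j).card + 1) ≤
      (absorbed (V.erase k) (fun l => if rep l = k then j else rep l) j).card := by
  have hsub : insert k (absorbed V rep k ∪ absorbed V rep j) ⊆
      absorbed (V.erase k) (fun l => if rep l = k then j else rep l) j := by
    intro l hl
    simp only [absorbed, mem_insert, mem_union, mem_filter, mem_univ, true_and,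
      mem_erase] at hl ⊢
    rcases hl with rfl | ⟨hlV, rfl⟩ | ⟨hlV, rfl⟩
    · simp [hrep]
    · simp [hlV]
    · simp [hlV, Ne.symm hkj]
  have hdisj : Disjoint (absorbed V rep k) (absorbed V rep j) :=
    disjoint_filter.2 fun l _ hk hj => hkj (hk.2.symm.trans hj.2)
  have hk_notMem : k ∉ absorbed V rep k ∪ absorbed V rep j := by simp [absorbed, hk]
  have := card_le_card hsub
  rw [card_insert_of_notMem hk_notMem, card_union_of_disjoint hdisj] at this
  omega

/-- `rep` sends each bit to the surviving vertex it has been merged into; the edges of `G` cover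
the dependencies of the surviving feedback functions with their inputs replaced by their
representatives. -/
structure IsReduction (F : Fin n → (Fin n → Bool) → Bool) (G : DiGraph (Fin n))
    (rep : Fin n → Fin n) : Prop where
  rep_mem : ∀ l, rep l ∈ G.verts
  rep_eq_self : ∀ l ∈ G.verts, rep l = l
  edge_mem : ∀ k ∈ G.verts, ∀ l ∈ depF n (F k), (rep l, k) ∈ G.edges
  determinedBy : ∀ l ∉ G.verts, DeterminedBy F l (rep l) (absorbed G.verts rep (rep l)).card

variable {F : Fin n → (Fin n → Bool) → Bool} {G G' : DiGraph (Fin n)} {rep : Fin n → Fin n}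

lemma isReduction_feedbackGraph (F : Fin n → (Fin n → Bool) → Bool) :
    IsReduction F (feedbackGraph n F) id where
  rep_mem := by simp [feedbackGraph]
  rep_eq_self := by simp
  edge_mem := by simp [feedbackGraph]
  determinedBy := by simp [feedbackGraph]

lemma IsReduction.determinedBy_of_forall_rep_eq (hG : IsReduction F G rep) {k j : Fin n}
    (h : ∀ l ∈ depF n (F k), rep l = j) :
    DeterminedBy F k j ((absorbed G.verts rep j).card + 1) := by
  refine determinedBy_succ_of_forall_mem_depF fun l hl => ?_
  by_cases hlV : l ∈ G.verts
  · exact .inl ((hG.rep_eq_self l hlV).symm.trans (h l hl))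
  · exact .inr (h l hl ▸ hG.determinedBy l hlV)

lemma IsReduction.subStep (hG : IsReduction F G rep) (hs : SubStep G G') :
    ∃ rep', IsReduction F G' rep' := by
  obtain ⟨k, j, hk, hj, hkj, hin, rfl⟩ := hs
  have hrep_k : rep k = k := hG.rep_eq_self k hk
  have hdet_k : DeterminedBy F k j ((absorbed G.verts rep j).card + 1) := by
    refine hG.determinedBy_of_forall_rep_eq fun l hl => ?_
    have : (rep l, k) ∈ G.edges.filter (·.2 = k) := mem_filter.2 ⟨hG.edge_mem k hk l hl, rfl⟩
    simpa [hin] using this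
  have hcard := card_absorbed_add_le_absorbed_erase (j := j) hk hrep_k hkj
  refine ⟨fun l => if rep l = k then j else rep l, ⟨fun l => ?_, fun l hl => ?_, ?_, ?_⟩⟩
  · have := hG.rep_mem l
    split_ifs with h
    · exact mem_erase.2 ⟨Ne.symm hkj, hj⟩
    · exact mem_erase.2 ⟨h, this⟩
  · obtain ⟨hlk, hlV⟩ := mem_erase.1 hl
    simp [hG.rep_eq_self l hlV, hlk]
  · intro m hm l hl
    have hedge := hG.edge_mem m (mem_erase.1 hm).2 l hl
    split_ifs with h
    · exact mem_union_right _ (mem_image.2 ⟨(rep l, m), mem_filter.2 ⟨hedge, h⟩, rfl⟩)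
    · exact mem_union_left _ (mem_filter.2 ⟨hedge, h, (mem_erase.1 hm).1⟩)
  · intro l hl
    by_cases hlk : l = k
    · subst hlk
      simpa [hrep_k] using hdet_k.mono (by omega)
    have hlV : l ∉ G.verts := fun h => hl (mem_erase.2 ⟨hlk, h⟩)
    by_cases h : rep l = k
    · have hl_k : DeterminedBy F l k (absorbed G.verts rep k).card := h ▸ hG.determinedBy l hlV
      simpa [h] using (hl_k.trans hdet_k).mono hcard
    · simpa [h] using (hG.determinedBy l hlV).mono
        (card_le_card (absorbed_subset_absorbed_erase h))

lemma exists_isReduction_of_reflTransGen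
    (h : Relation.ReflTransGen SubStep (feedbackGraph n F) G) : ∃ rep, IsReduction F G rep := by
  induction h with
  | refl => exact ⟨id, isReduction_feedbackGraph F⟩
  | tail _ hs ih =>
    obtain ⟨rep, hrep⟩ := ih
    exact hrep.subStep hs

lemma IsReduction.determinedBy_self {i : Fin n} (hG : IsReduction F G rep)
    (hV : G.verts = {i}) : DeterminedBy F i i n := by
  have hrep : ∀ l, rep l = i := fun l => by simpa [hV] using hG.rep_mem l
  have hcard := card_absorbed_add_card_le G.verts rep i
  rw [hV, card_singleton] at hcard
  exact (hG.determinedBy_of_forall_rep_eq fun l _ => hrep l).mono (by rwa [hV])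

end Reduction

theorem recurrence_of_reducible_general (n : ℕ) (F : Fin n → (Fin n → Bool) → Bool)
    (i : Fin n) (hred : ReducibleTo (feedbackGraph n F) i) :
    ∃ h : (Fin n → Bool) → Bool, ∀ s0 : Fin n → Bool, ∀ t : ℕ, n ≤ t →
      stateAt n F s0 t i = h (fun j : Fin n => stateAt n F s0 (t - n + (j : ℕ)) i) := by
  obtain ⟨G, hG, hV⟩ := hred
  obtain ⟨rep, hrep⟩ := exists_isReduction_of_reflTransGen hG
  obtain ⟨h, hh⟩ := (hrep.determinedBy_self hV).exists_eq_apply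
  refine ⟨h, fun s0 t ht => ?_⟩
  simpa only [stateAt_stateAt, Nat.sub_add_cancel ht] using hh (stateAt n F s0 (t - n))

/-- Lemma 1: if the feedback graph of an NLFSR with singular feedback
functions can be reduced to the single vertex `v_i`, then there is a non-linear
recurrence describing the sequence of values of bit `i`. -/
theorem recurrence_of_reducible (n : ℕ) (hn : 0 < n) (F : Fin n → (Fin n → Bool) → Bool)
    (hsing : SingularAll n F)
    (i : Fin n) (hred : ReducibleTo (feedbackGraph n F) i) :
    ∃ h : (Fin n → Bool) → Bool, ∀ s0 : Fin n → Bool, ∀ t : ℕ, n ≤ t →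
      stateAt n F s0 t i = h (fun j : Fin n => stateAt n F s0 (t - n + (j : ℕ)) i) :=
  recurrence_of_reducible_general n F i hred
end

section
/- Let N be a uniform n-bit NLFSR (n ≥ 2) with singular feedback functions and terminal bit τ. Then the feedback graph of N is reducible to the single vertex v_τ. -/
namespace DiGraph

variable {V : Type} [DecidableEq V]

/-- `ρ` sends every original vertex to the surviving vertex of `S` it has been merged into. -/
def contract (E : Finset (V × V)) (S : Finset V) (ρ : V → V) : DiGraph V :=
  ⟨S, (E.filter (fun e => e.2 ∈ S)).image (fun e => (ρ e.1, e.2))⟩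

lemma mem_contract_edges {E : Finset (V × V)} {S : Finset V} {ρ : V → V} {x y : V} :
    (x, y) ∈ (contract E S ρ).edges ↔ y ∈ S ∧ ∃ a, (a, y) ∈ E ∧ ρ a = x := by
  simp only [contract, Finset.mem_image, Finset.mem_filter, Prod.mk.injEq, Prod.exists,
    exists_eq_right_right]
  aesop

lemma subStep_contract {E : Finset (V × V)} {S : Finset V} {ρ : V → V} {i j : V}
    (hi : i ∈ S) (hj : j ∈ S) (hij : i ≠ j) (hin : ∀ a, (a, i) ∈ E → ρ a = j)
    (hne : ∃ a, (a, i) ∈ E) :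
    SubStep (contract E S ρ) (contract E (S.erase i) (fun a => if ρ a = i then j else ρ a)) := by
  refine ⟨i, j, hi, hj, hij, ?_, ?_⟩
  · ext ⟨x, y⟩
    simp only [Finset.mem_filter, Finset.mem_singleton, Prod.mk.injEq, mem_contract_edges]
    constructor
    · rintro ⟨⟨-, a, ha, rfl⟩, rfl⟩
      exact ⟨hin a ha, rfl⟩
    · rintro ⟨rfl, rfl⟩
      obtain ⟨a, ha⟩ := hne
      exact ⟨⟨hi, a, ha, hin a ha⟩, rfl⟩
  · refine congrArg₂ DiGraph.mk rfl ?_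
    change (contract E (S.erase i) (fun a => if ρ a = i then j else ρ a)).edges = _
    ext ⟨x, y⟩
    simp only [Finset.mem_union, Finset.mem_filter, Finset.mem_image, Finset.mem_erase,
      Prod.exists, Prod.mk.injEq, mem_contract_edges]
    constructor
    · rintro ⟨⟨hyi, hy⟩, a, ha, rfl⟩
      by_cases hai : ρ a = i
      · exact Or.inr ⟨i, y, ⟨⟨hy, a, ha, hai⟩, rfl⟩, by simp [hai], rfl⟩
      · exact Or.inl ⟨⟨hy, a, ha, by simp [hai]⟩, by simp [hai], hyi⟩
    · rintro (⟨⟨hy, a, ha, rfl⟩, hai, hyi⟩ | ⟨x', y, ⟨⟨hy, a, ha, hax⟩, hxi⟩, rfl, rfl⟩)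
      · exact ⟨⟨hyi, hy⟩, a, ha, by simp [hai]⟩
      · rw [hxi] at hax
        have hyi : y ≠ i := by
          rintro rfl
          exact hij (hax.symm.trans (hin a ha))
        exact ⟨⟨hyi, hy⟩, a, ha, by simp [hax]⟩

def collapse (E : Finset (V × V)) (S : Finset V) (r : V) : DiGraph V :=
  contract E S (fun a => if a ∈ S then a else r)

lemma subStep_collapse_erase {E : Finset (V × V)} {S : Finset V} {r i : V}
    (hr : r ∈ S) (hi : i ∈ S) (hir : i ≠ r) (hin : ∀ a, (a, i) ∈ E → a ∈ S → a = r)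
    (hne : ∃ a, (a, i) ∈ E) :
    SubStep (collapse E S r) (collapse E (S.erase i) r) := by
  have key := subStep_contract (E := E) (ρ := fun a => if a ∈ S then a else r) hi hr hir
    (fun a ha => by split_ifs with haS; exacts [hin a ha haS, rfl]) hne
  rw [collapse, collapse]
  convert key using 2
  funext a
  by_cases haS : a ∈ S <;> by_cases hai : a = i <;> simp [haS, hai, hir.symm]

lemma subStep_collapse_erase_root {E : Finset (V × V)} {S : Finset V} {r j : V}
    (hr : r ∈ S) (hj : j ∈ S) (hjr : j ≠ r) (hin : ∀ a, (a, r) ∈ E → a = j) (hjE : (j, r) ∈ E) :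
    SubStep (collapse E S r) (collapse E (S.erase r) j) := by
  have key := subStep_contract (E := E) (ρ := fun a => if a ∈ S then a else r) hr hj hjr.symm
    (fun a ha => by obtain rfl := hin a ha; simp [hj]) ⟨j, hjE⟩
  rw [collapse, collapse]
  convert key using 2
  funext a
  by_cases haS : a ∈ S <;> by_cases har : a = r <;> simp [haS, har]

lemma collapse_univ [Fintype V] (E : Finset (V × V)) (r : V) :
    collapse E Finset.univ r = ⟨Finset.univ, E⟩ := by
  refine congrArg₂ DiGraph.mk rfl ?_
  ext ⟨x, y⟩
  simp

end DiGraph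

section depF

variable {n : ℕ}

lemma mem_depF {f : (Fin n → Bool) → Bool} {k : Fin n} :
    k ∈ depF n f ↔ ∃ s, f (Function.update s k false) ≠ f (Function.update s k true) := by
  simp [depF]

lemma depF_eval (a : Fin n) : depF n (fun s => s a) = {a} := by
  ext k
  simp only [mem_depF, Finset.mem_singleton]
  constructor
  · rintro ⟨s, hs⟩
    by_contra hka
    simp [Function.update_of_ne (Ne.symm hka)] at hs
  · rintro rfl
    exact ⟨fun _ => false, by simp⟩

lemma mem_depF_of_notMem_depF_xor_eval {f : (Fin n → Bool) → Bool} {a : Fin n}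
    (h : a ∉ depF n (fun s => xor (f s) (s a))) : a ∈ depF n f := by
  simp only [mem_depF, not_exists, not_not] at h
  refine mem_depF.mpr ⟨fun _ => false, fun hf => ?_⟩
  have h0 := h (fun _ => false)
  simp only [Function.update_self, hf] at h0
  simp at h0

lemma mem_depF_xor_eval_of_ne {f : (Fin n → Bool) → Bool} {a k : Fin n}
    (hk : k ∈ depF n f) (hka : k ≠ a) : k ∈ depF n (fun s => xor (f s) (s a)) := by
  obtain ⟨s, hs⟩ := mem_depF.mp hk
  refine mem_depF.mpr ⟨s, fun h => hs ?_⟩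
  simpa [Function.update_of_ne hka.symm] using h

end depF

lemma val_succIdx {n : ℕ} (i : Fin n) :
    (succIdx i : ℕ) = if (i : ℕ) + 1 = n then 0 else (i : ℕ) + 1 := by
  unfold succIdx
  split_ifs with h
  · simp [h]
  · exact Nat.mod_eq_of_lt (by omega)

lemma mem_feedbackGraph_edges {n : ℕ} {F : Fin n → (Fin n → Bool) → Bool} {a b : Fin n} :
    (a, b) ∈ (feedbackGraph n F).edges ↔ a ∈ depF n (F b) := by
  simp [feedbackGraph]

lemma apply_eq_of_lt_terminalBit {n : ℕ} (hn : 0 < n) (F : Fin n → (Fin n → Bool) → Bool)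
    (j : Fin n) (hj : (j : ℕ) < terminalBit n F) (s : Fin n → Bool) : F j s = s (succIdx j) :=
  (Nat.sSup_mem (s := {i | i < n ∧ ∀ j : Fin n, (j : ℕ) < i → ∀ s, F j s = s (succIdx j)})
    ⟨0, hn, fun _ hj => absurd hj (Nat.not_lt_zero _)⟩ ⟨n, fun _ hi => hi.1.le⟩).2 j hj s

open DiGraph Relation

section Reduction

variable {n : ℕ} {F : Fin n → (Fin n → Bool) → Bool}

lemma feedbackGraph_reflTransGen_collapse_ge :
    ∀ (k : ℕ) (hk : k < n), (∀ j : Fin n, (j : ℕ) < k → ∀ s, F j s = s (succIdx j)) →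
      ReflTransGen SubStep (feedbackGraph n F)
        (collapse (feedbackGraph n F).edges (Finset.univ.filter fun a : Fin n => k ≤ a) ⟨k, hk⟩)
  | 0, hk, _ => by
    simp only [zero_le, Finset.filter_true, collapse_univ]
    exact .refl
  | k + 1, hk, hshift => by
    refine (feedbackGraph_reflTransGen_collapse_ge k (by omega)
      fun j hj => hshift j (by omega)).tail ?_
    have hsucc : succIdx (⟨k, by omega⟩ : Fin n) = ⟨k + 1, hk⟩ := by
      ext
      rw [val_succIdx, if_neg (by simp; omega)]
    have hdep : depF n (F ⟨k, by omega⟩) = {⟨k + 1, hk⟩} := by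
      rw [funext (hshift ⟨k, by omega⟩ (by simp)), depF_eval, hsucc]
    have herase : (Finset.univ.filter fun a : Fin n => k ≤ a).erase ⟨k, by omega⟩ =
        Finset.univ.filter fun a : Fin n => k + 1 ≤ a := by
      ext a
      simp [Fin.ext_iff]
      omega
    rw [← herase]
    refine subStep_collapse_erase_root (by simp) (by simp) (by simp) (fun a ha => ?_) ?_
    · simpa [mem_feedbackGraph_edges, hdep] using ha
    · simp [mem_feedbackGraph_edges, hdep]

lemma eq_succIdx_or_le_of_mem_depF {τ i k : Fin n}
    (hdep : ∀ i : Fin n, (τ : ℕ) < i → ∀ k ∈ depF n (gfun n F i), (k : ℕ) ≤ τ)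
    (hi : (τ : ℕ) < i) (hk : k ∈ depF n (F i)) : k = succIdx i ∨ (k : ℕ) ≤ τ := by
  by_cases hks : k = succIdx i
  · exact Or.inl hks
  · exact Or.inr (hdep i hi k (mem_depF_xor_eval_of_ne hk hks))

lemma collapse_window_reflTransGen_singleton (hsing : SingularAll n F) (τ : Fin n)
    (hdep : ∀ i : Fin n, (τ : ℕ) < i → ∀ k ∈ depF n (gfun n F i), (k : ℕ) ≤ τ)
    (m : ℕ) (hτm : (τ : ℕ) < m) (hmn : m ≤ n) :
    ReflTransGen SubStep
      (collapse (feedbackGraph n F).edges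
        (Finset.univ.filter fun a : Fin n => (τ : ℕ) ≤ a ∧ (a : ℕ) < m) τ)
      (collapse (feedbackGraph n F).edges {τ} τ) := by
  induction m, hτm using Nat.le_induction with
  | base =>
    convert ReflTransGen.refl using 2
    ext a
    simp [Fin.ext_iff]
    omega
  | succ m hτm ih =>
    refine .head ?_ (ih (by omega))
    obtain ⟨i, hi⟩ : ∃ i : Fin n, (i : ℕ) = m := ⟨⟨m, by omega⟩, rfl⟩
    have herase : (Finset.univ.filter fun a : Fin n => (τ : ℕ) ≤ a ∧ (a : ℕ) < m + 1).erase i =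
        Finset.univ.filter fun a : Fin n => (τ : ℕ) ≤ a ∧ (a : ℕ) < m := by
      ext a
      simp [Fin.ext_iff]
      omega
    rw [← herase]
    refine subStep_collapse_erase (by simp; omega) (by simp; omega) (by simp [Fin.ext_iff]; omega)
      (fun a ha haS => ?_)
      ⟨succIdx i, mem_feedbackGraph_edges.mpr (mem_depF_of_notMem_depF_xor_eval (hsing i))⟩
    simp only [Finset.mem_filter, Finset.mem_univ, true_and] at haS
    rcases eq_succIdx_or_le_of_mem_depF hdep (by omega) (mem_feedbackGraph_edges.mp ha) with
      rfl | ha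
    -- `succIdx i` is `v_{m+1}`, outside the window, or `v_0`, inside it only when `τ = 0`.
    · have := val_succIdx i
      ext
      split_ifs at this <;> omega
    · ext; omega

end Reduction

theorem uniform_reducible_to_terminal_general (n : ℕ)
    (F : Fin n → (Fin n → Bool) → Bool) (hU : UniformN n F)
    (τ : Fin n) (hτ : (τ : ℕ) = terminalBit n F) :
    ReducibleTo (feedbackGraph n F) τ := by
  obtain ⟨hsing, hdep⟩ := hU
  rw [← hτ] at hdep
  have hshift : ∀ j : Fin n, (j : ℕ) < τ → ∀ s, F j s = s (succIdx j) :=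
    hτ ▸ apply_eq_of_lt_terminalBit τ.pos F
  have hprefix := feedbackGraph_reflTransGen_collapse_ge τ τ.isLt hshift
  have hwindow := collapse_window_reflTransGen_singleton hsing τ hdep n τ.isLt le_rfl
  refine ⟨collapse (feedbackGraph n F).edges {τ} τ, hprefix.trans ?_, rfl⟩
  convert hwindow using 3
  simp

/-- Lemma 2: the feedback graph of a uniform NLFSR is reducible to the
single vertex corresponding to its terminal bit. -/
theorem uniform_reducible_to_terminal (n : ℕ) (hn : 2 ≤ n)
    (F : Fin n → (Fin n → Bool) → Bool) (hU : UniformN n F)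
    (τ : Fin n) (hτ : (τ : ℕ) = terminalBit n F) :
    ReducibleTo (feedbackGraph n F) τ :=
  uniform_reducible_to_terminal_general n F hU τ hτ
end

section
/- Let N be an n-bit Fibonacci NLFSR with n ≥ 2 and f_{n−1} = x_0 ⊕ g, where g is not identically zero. Then there exists a uniform n-bit NLFSR N′ with singular feedback functions whose terminal bit is at most n−2 such that N′ is equivalent to N. -/
/-!
Relabel the bits of a Fibonacci register cyclically, bit `i + 1` becoming bit `i`. The resulting
register is again singular, and the feedback `g`, which sat on bit `n - 1`, now sits on bit `n - 2`,
while every other bit (bit `n - 1` included) is a plain shift; so the terminal bit is `n - 2` and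
the register is uniform. The rotated register outputs bit `1` of the Fibonacci one, which is the
Fibonacci output one clock later.
-/

open Function Finset

section Rotation

variable {n : ℕ}

theorem val_finRotate (i : Fin n) :
    (finRotate n i : ℕ) = if (i : ℕ) + 1 = n then 0 else (i : ℕ) + 1 := by
  obtain ⟨m, rfl⟩ : ∃ m, n = m + 1 := Nat.exists_eq_add_one.mpr i.pos
  rw [coe_finRotate]
  simp [Fin.ext_iff]

theorem succIdx_eq_finRotate (i : Fin n) : succIdx i = finRotate n i := by
  ext
  rw [val_finRotate]
  simp only [succIdx]
  split_ifs with h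
  · rw [h, Nat.mod_self]
  · exact Nat.mod_eq_of_lt (by omega)

def rotateNLFSR (n : ℕ) (F : Fin n → (Fin n → Bool) → Bool) : Fin n → (Fin n → Bool) → Bool :=
  fun i s => F (finRotate n i) (s ∘ (finRotate n).symm)

theorem semiconj_nlfsrStep_rotateNLFSR (F : Fin n → (Fin n → Bool) → Bool) :
    Semiconj (· ∘ finRotate n) (nlfsrStep n F) (nlfsrStep n (rotateNLFSR n F)) := fun u => by
  funext i
  simp only [nlfsrStep, rotateNLFSR, comp_def, Equiv.apply_symm_apply]

theorem stateAt_rotateNLFSR (F : Fin n → (Fin n → Bool) → Bool) (u : Fin n → Bool) (t : ℕ) :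
    stateAt n (rotateNLFSR n F) (u ∘ finRotate n) t = stateAt n F u t ∘ finRotate n :=
  ((semiconj_nlfsrStep_rotateNLFSR F).iterate_right t u).symm

theorem equivalentN_rotateNLFSR {F : Fin n → (Fin n → Bool) → Bool}
    (h0 : ∀ i : Fin n, (i : ℕ) = 0 → ∀ s, F i s = s (succIdx i)) :
    EquivalentN n (rotateNLFSR n F) F := by
  refine ⟨(fun _ => false) ∘ finRotate n, nlfsrStep n F (fun _ => false), fun t z hz => ?_⟩
  rw [stateAt_rotateNLFSR, comp_apply, ← succIdx_eq_finRotate, ← h0 z hz (stateAt n F _ t),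
    stateAt, stateAt, ← iterate_succ_apply, iterate_succ_apply']
  rfl

theorem mem_depF_comp_symm (e : Fin n ≃ Fin n) (f : (Fin n → Bool) → Bool) (i : Fin n) :
    i ∈ depF n (fun s => f (s ∘ e.symm)) ↔ e i ∈ depF n f := by
  simp only [depF, mem_filter, mem_univ, true_and, update_comp_equiv, Equiv.symm_symm]
  constructor
  · rintro ⟨s, hs⟩
    exact ⟨_, hs⟩
  · rintro ⟨s, hs⟩
    exact ⟨s ∘ e, by simpa [comp_assoc] using hs⟩

theorem gfun_rotateNLFSR (F : Fin n → (Fin n → Bool) → Bool) (i : Fin n) :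
    gfun n (rotateNLFSR n F) i = fun s => gfun n F (finRotate n i) (s ∘ (finRotate n).symm) := by
  funext s
  simp only [gfun, rotateNLFSR, succIdx_eq_finRotate, comp_apply, Equiv.symm_apply_apply]

theorem singularAll_rotateNLFSR {F : Fin n → (Fin n → Bool) → Bool} (hF : SingularAll n F) :
    SingularAll n (rotateNLFSR n F) := fun i => by
  rw [gfun_rotateNLFSR, mem_depF_comp_symm, succIdx_eq_finRotate]
  simpa [succIdx_eq_finRotate] using hF (finRotate n i)

theorem rotateNLFSR_apply_of_shift {F : Fin n → (Fin n → Bool) → Bool} {i : Fin n}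
    (h : ∀ s, F (finRotate n i) s = s (succIdx (finRotate n i))) (s : Fin n → Bool) :
    rotateNLFSR n F i s = s (succIdx i) := by
  rw [rotateNLFSR, h, succIdx_eq_finRotate, succIdx_eq_finRotate, comp_apply,
    Equiv.symm_apply_apply]

end Rotation

section TerminalBit

variable {n : ℕ} {F : Fin n → (Fin n → Bool) → Bool}

theorem depF_gfun_eq_empty {i : Fin n} (h : ∀ s, F i s = s (succIdx i)) :
    depF n (gfun n F i) = ∅ := by
  simp [depF, gfun, h]

theorem terminalBit_eq {k : Fin n}
    (hbelow : ∀ j : Fin n, (j : ℕ) < k → ∀ s, F j s = s (succIdx j))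
    (hk : ∃ s, gfun n F k s = true) : terminalBit n F = k := by
  refine IsGreatest.csSup_eq ⟨⟨k.isLt, hbelow⟩, fun i ⟨_, hi⟩ => not_lt.1 fun hki => ?_⟩
  obtain ⟨s, hs⟩ := hk
  simp [gfun, hi k hki s] at hs

end TerminalBit

namespace FibonacciP

variable {n : ℕ} {F : Fin n → (Fin n → Bool) → Bool}

theorem singularAll (hF : FibonacciP n F) : SingularAll n F := fun i => by
  by_cases hi : (i : ℕ) = n - 1
  · exact hF.2 i hi
  · simp [depF_gfun_eq_empty (hF.1 i (by omega))]

theorem rotateNLFSR_apply_of_ne (hF : FibonacciP n F) (hn : 2 ≤ n) {i : Fin n}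
    (hi : (i : ℕ) ≠ n - 2) (s : Fin n → Bool) : rotateNLFSR n F i s = s (succIdx i) :=
  rotateNLFSR_apply_of_shift (hF.1 _ (by rw [val_finRotate]; split_ifs <;> omega)) s

theorem terminalBit_rotateNLFSR (hF : FibonacciP n F) (hn : 2 ≤ n) {l : Fin n}
    (hl : (l : ℕ) = n - 1) (hg : ∃ s, gfun n F l s = true) :
    terminalBit n (rotateNLFSR n F) = n - 2 := by
  have hrot : finRotate n ⟨n - 2, by omega⟩ = l := by
    ext
    rw [val_finRotate, Fin.val_mk, hl]
    split_ifs <;> omega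
  obtain ⟨s, hs⟩ := hg
  refine terminalBit_eq (k := ⟨n - 2, by omega⟩)
    (fun j hj => hF.rotateNLFSR_apply_of_ne hn hj.ne) ⟨s ∘ finRotate n, ?_⟩
  simpa [gfun_rotateNLFSR, hrot, comp_assoc] using hs

theorem uniformN_rotateNLFSR (hF : FibonacciP n F) (hn : 2 ≤ n)
    (hτ : terminalBit n (rotateNLFSR n F) = n - 2) : UniformN n (rotateNLFSR n F) := by
  refine ⟨singularAll_rotateNLFSR hF.singularAll, fun i hi k hk => ?_⟩
  rw [depF_gfun_eq_empty (hF.rotateNLFSR_apply_of_ne hn (by omega))] at hk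
  exact absurd hk (notMem_empty k)

end FibonacciP

/-- every Fibonacci NLFSR (n ≥ 2, with non-zero feedback `g`) is
equivalent to a uniform NLFSR with singular feedback functions whose terminal bit
is at most `n − 2`. -/
theorem fibonacci_terminal_reducible (n : ℕ) (hn : 2 ≤ n)
    (F : Fin n → (Fin n → Bool) → Bool) (hFib : FibonacciP n F)
    (l : Fin n) (hl : (l : ℕ) = n - 1)
    (hg : ∃ s : Fin n → Bool, gfun n F l s = true) :
    ∃ F' : Fin n → (Fin n → Bool) → Bool,
      UniformN n F' ∧ terminalBit n F' ≤ n - 2 ∧ EquivalentN n F' F := by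
  have hτ := hFib.terminalBit_rotateNLFSR hn hl hg
  exact ⟨rotateNLFSR n F, hFib.uniformN_rotateNLFSR hn hτ, hτ.le,
    equivalentN_rotateNLFSR fun i hi => hFib.1 i (by omega)⟩
end
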